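/- arXiv:1606.04128 — 4 statements merged into one kernel-verified Lean document; each statement's English description precedes it below -/
import Mathlib

section
/- For the unit cube Q_p = [0,1]^p ⊆ ℝ^p, s > p, and any positive integers m ≥ 2 and N, the polarization constants satisfy 𝒫_s(Q_p; m^p N) ≥ m^s · 𝒫_s(Q_p; N). -/
open scoped ENNReal BigOperators

/-- The `N`-th Riesz `s`-polarization constant of `A`. -/
noncomputable def rPolConst {p : ℕ} (s : ℝ) (A : Set (EuclideanSpace ℝ (Fin p))) (N : ℕ) : ℝ≥0∞ :=
  ⨆ x : {x : Fin N → EuclideanSpace ℝ (Fin p) // ∀ j, x j ∈ A},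
    ⨅ y ∈ A, ∑ j, (edist y (x.1 j) ^ s)⁻¹

/-- The unit cube `[0,1]^p` in `ℝ^p`. -/
def unitCube (p : ℕ) : Set (EuclideanSpace ℝ (Fin p)) :=
  {x | ∀ i, x i ∈ Set.Icc (0 : ℝ) 1}

/-!
Split `[0,1]^p` into the `m^p` subcubes `(k + [0,1]^p) / m`, `k ∈ {0,…,m-1}^p`, and put a copy of
an `N`-point configuration `x`, shrunk by the factor `m`, into each of them. A point `y` of the cube
lies in some subcube `k`, and the copy sitting there alone contributes the potential of `x` at
`m y - k ∈ [0,1]^p`, multiplied by `m^s` since the Riesz kernel is homogeneous of degree `-s`.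
-/

open Function
open scoped NNReal

section RieszPotential

variable {E ι κ : Type*} [Fintype ι] [Fintype κ]

noncomputable def rieszPotential [PseudoEMetricSpace E] (s : ℝ) (x : ι → E) (y : E) : ℝ≥0∞ :=
  ∑ j, (edist y (x j) ^ s)⁻¹

theorem rieszPotential_comp_le_of_injective [PseudoEMetricSpace E] (s : ℝ) (x : κ → E) {f : ι → κ}
    (hf : Injective f) (y : E) : rieszPotential s (x ∘ f) y ≤ rieszPotential s x y := by
  simpa only [rieszPotential, tsum_fintype, comp_apply] using
    ENNReal.tsum_comp_le_tsum_of_injective hf fun j => (edist y (x j) ^ s)⁻¹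

theorem rieszPotential_comp_equiv [PseudoEMetricSpace E] (s : ℝ) (x : κ → E) (e : ι ≃ κ) (y : E) :
    rieszPotential s (x ∘ e) y = rieszPotential s x y :=
  e.sum_comp fun j => (edist y (x j) ^ s)⁻¹

theorem rieszPotential_inv_smul_add [NormedAddCommGroup E] [NormedSpace ℝ E] (s : ℝ) {c : ℝ≥0}
    (hc : c ≠ 0) (a : E) (x : ι → E) (y : E) :
    rieszPotential s (fun j => (c : ℝ)⁻¹ • (x j + a)) ((c : ℝ)⁻¹ • (y + a)) =
      (c : ℝ≥0∞) ^ s * rieszPotential s x y := by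
  rw [rieszPotential, rieszPotential, Finset.mul_sum]
  refine Finset.sum_congr rfl fun j _ => ?_
  rw [edist_smul₀, edist_add_right, ← NNReal.coe_inv, NNReal.nnnorm_eq, ENNReal.smul_def,
    smul_eq_mul, ENNReal.coe_inv hc, ENNReal.mul_rpow_of_ne_top (by simp [hc]) (edist_ne_top _ _),
    ENNReal.inv_rpow, ENNReal.mul_inv (.inl (by simp [hc])) (.inl (by simp [hc])), inv_inv]

end RieszPotential

theorem iInf_rieszPotential_le_rPolConst {p N : ℕ} {ι : Type*} [Fintype ι] (s : ℝ)
    {A : Set (EuclideanSpace ℝ (Fin p))} (e : ι ≃ Fin N) (x : ι → EuclideanSpace ℝ (Fin p))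
    (hx : ∀ i, x i ∈ A) :
    ⨅ y ∈ A, rieszPotential s x y ≤ rPolConst s A N := by
  refine le_iSup_of_le ⟨x ∘ e.symm, fun j => hx _⟩ (le_of_eq ?_)
  change ⨅ y ∈ A, rieszPotential s x y = ⨅ y ∈ A, rieszPotential s (x ∘ e.symm) y
  simp_rw [rieszPotential_comp_equiv]

theorem exists_fin_mul_sub_mem_Icc {m : ℕ} (hm : 0 < m) {a : ℝ} (ha : a ∈ Set.Icc (0 : ℝ) 1) :
    ∃ k : Fin m, (m : ℝ) * a - k ∈ Set.Icc (0 : ℝ) 1 := by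
  have hma : 0 ≤ (m : ℝ) * a := mul_nonneg m.cast_nonneg ha.1
  by_cases hfl : ⌊(m : ℝ) * a⌋₊ < m
  · refine ⟨⟨_, hfl⟩, sub_nonneg.2 (Nat.floor_le hma), ?_⟩
    linarith [Nat.lt_floor_add_one ((m : ℝ) * a)]
  · -- the floor reaches `m` only at `a = 1`, which belongs to the last cell
    have hlast : (m : ℝ) ≤ m * a := (Nat.cast_le.2 (not_lt.1 hfl)).trans (Nat.floor_le hma)
    have hm1 : (1 : ℝ) ≤ m := by exact_mod_cast hm
    refine ⟨⟨m - 1, Nat.sub_lt hm one_pos⟩, ?_⟩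
    rw [Fin.val_mk, Nat.cast_pred hm]
    constructor <;> nlinarith [ha.2]

def gridCorner {p m : ℕ} (k : Fin p → Fin m) : EuclideanSpace ℝ (Fin p) :=
  WithLp.toLp 2 fun t => (k t : ℝ)

theorem exists_smul_sub_gridCorner_mem_unitCube {p m : ℕ} (hm : 0 < m)
    {y : EuclideanSpace ℝ (Fin p)} (hy : y ∈ unitCube p) : ∃ k : Fin p → Fin m, (m : ℝ) • y - gridCorner k ∈ unitCube p := by
  choose k hk using fun t => exists_fin_mul_sub_mem_Icc hm (hy t)
  exact ⟨k, hk⟩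

theorem inv_smul_add_gridCorner_mem_unitCube {p m : ℕ} (k : Fin p → Fin m)
    {x : EuclideanSpace ℝ (Fin p)} (hx : x ∈ unitCube p) :
    (m : ℝ)⁻¹ • (x + gridCorner k) ∈ unitCube p := by
  intro t
  have hkt : (k t : ℝ) + 1 ≤ m := by exact_mod_cast (k t).isLt
  have hm : (0 : ℝ) < m := by linarith [(k t : ℕ).cast_nonneg (α := ℝ)]
  obtain ⟨hx0, hx1⟩ := hx t
  change (m : ℝ)⁻¹ * (x t + k t) ∈ Set.Icc (0 : ℝ) 1
  rw [Set.mem_Icc, inv_mul_le_iff₀ hm]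
  exact ⟨by positivity, by linarith⟩

theorem stmt3_general {p : ℕ} (s : ℝ) (m N : ℕ) (hm : 2 ≤ m) :
    (m : ℝ≥0∞) ^ s * rPolConst s (unitCube p) N ≤ rPolConst s (unitCube p) (m ^ p * N) := by
  have hm0 : 0 < m := by omega
  rw [rPolConst, ENNReal.mul_iSup]
  refine iSup_le fun ⟨x, hx⟩ => ?_
  let X : (Fin p → Fin m) × Fin N → EuclideanSpace ℝ (Fin p) :=
    fun ki => (m : ℝ)⁻¹ • (x ki.2 + gridCorner ki.1)
  let e : (Fin p → Fin m) × Fin N ≃ Fin (m ^ p * N) :=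
    (finFunctionFinEquiv.prodCongr (Equiv.refl (Fin N))).trans finProdFinEquiv
  refine le_trans ?_ <| iInf_rieszPotential_le_rPolConst s e X fun ki =>
    inv_smul_add_gridCorner_mem_unitCube ki.1 (hx ki.2)
  refine le_iInf₂ fun y hy => ?_
  obtain ⟨k, hk⟩ := exists_smul_sub_gridCorner_mem_unitCube hm0 hy
  calc (m : ℝ≥0∞) ^ s * ⨅ z ∈ unitCube p, rieszPotential s x z
      ≤ (m : ℝ≥0∞) ^ s * rieszPotential s x ((m : ℝ) • y - gridCorner k) := by
        gcongr
        exact iInf₂_le _ hk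
    _ = rieszPotential s (X ∘ Prod.mk k) y := by
        rw [← ENNReal.coe_natCast, ← rieszPotential_inv_smul_add s (by positivity) (gridCorner k),
          NNReal.coe_natCast, sub_add_cancel, inv_smul_smul₀ (by positivity)]
        rfl
    _ ≤ rieszPotential s X y :=
        rieszPotential_comp_le_of_injective s X (Prod.mk_right_injective k) y

theorem stmt3 {p : ℕ} (hp : 0 < p) (s : ℝ) (hs : (p : ℝ) < s)
    (m N : ℕ) (hm : 2 ≤ m) (hN : 0 < N) :
    (m : ℝ≥0∞) ^ s * rPolConst s (unitCube p) N ≤ rPolConst s (unitCube p) (m ^ p * N) :=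
  stmt3_general s m N hm
end

section
/- For a compact set A ⊆ ℝ^p and s > 0, the polarization constant relates to the covering radius: 𝒫_s(A; N)^{1/s} ≥ 1/ρ_N(A), where ρ_N(A) is the N-point covering radius of A. Moreover, lim_{s→∞} 𝒫_s(A;N)^{1/s} = 1/ρ_N(A). -/
open scoped ENNReal BigOperators NNReal

/-- The `N`-point covering radius (mesh norm) of `A`. -/
noncomputable def covRadius {p : ℕ} (A : Set (EuclideanSpace ℝ (Fin p))) (N : ℕ) : ℝ≥0∞ :=
  ⨅ x : {x : Fin N → EuclideanSpace ℝ (Fin p) // ∀ j, x j ∈ A},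
    ⨆ y ∈ A, ⨅ j, edist y (x.1 j)

/-!
Riesz energies are dominated by the nearest point: for distances `d j` to the points of a
configuration, `(min_j d j)^{-s} ≤ ∑_j (d j)^{-s} ≤ N (min_j d j)^{-s}`. Taking the worst point
of `A` and the best configuration gives `ρ_N(A)^{-s} ≤ 𝒫_s(A;N) ≤ N ρ_N(A)^{-s}`, and the `s`-th
root of the factor `N` tends to `1` as `s → ∞`.
-/

open Filter Topology

namespace ENNReal

variable {ι : Sort*} {s : ℝ}

lemma rpow_iInf (f : ι → ℝ≥0∞) (hs : 0 < s) : (⨅ i, f i) ^ s = ⨅ i, f i ^ s := by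
  simpa only [orderIsoRpow_apply] using map_iInf (orderIsoRpow s hs) f

lemma rpow_iSup (f : ι → ℝ≥0∞) (hs : 0 < s) : (⨆ i, f i) ^ s = ⨆ i, f i ^ s := by
  simpa only [orderIsoRpow_apply] using map_iSup (orderIsoRpow s hs) f

lemma inv_rpow_rpow_one_div (a : ℝ≥0∞) (hs : s ≠ 0) : ((a ^ s)⁻¹) ^ (1 / s) = a⁻¹ := by
  rw [← inv_rpow, one_div, rpow_rpow_inv hs]

lemma tendsto_rpow_one_div_atTop {c : ℝ≥0∞} (hc₀ : c ≠ 0) (hc : c ≠ ∞) :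
    Tendsto (fun s : ℝ => c ^ (1 / s)) atTop (𝓝 1) := by
  lift c to ℝ≥0 using hc
  have hc₀' : c ≠ 0 := mod_cast hc₀
  have hexp : Tendsto (fun s : ℝ => 1 / s) atTop (𝓝 0) := by
    simpa only [one_div] using tendsto_inv_atTop_zero
  have hnn : Tendsto (fun s : ℝ => c ^ (1 / s)) atTop (𝓝 1) := by
    simpa using tendsto_const_nhds.nnrpow hexp (Or.inl hc₀')
  simpa only [coe_rpow_of_ne_zero hc₀', coe_one] using tendsto_coe.mpr hnn

variable {κ : Type*} [Fintype κ]

lemma inv_rpow_iInf_le_sum (d : κ → ℝ≥0∞) (hs : 0 < s) :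
    ((⨅ j, d j) ^ s)⁻¹ ≤ ∑ j, (d j ^ s)⁻¹ := by
  rw [rpow_iInf _ hs, inv_iInf]
  exact iSup_le fun j =>
    Finset.single_le_sum (f := fun j => (d j ^ s)⁻¹) (fun _ _ => zero_le) (Finset.mem_univ j)

lemma sum_inv_rpow_le_card_mul (d : κ → ℝ≥0∞) (hs : 0 < s) :
    ∑ j, (d j ^ s)⁻¹ ≤ Fintype.card κ * ((⨅ j, d j) ^ s)⁻¹ := by
  calc ∑ j, (d j ^ s)⁻¹ ≤ ∑ _j : κ, ((⨅ j, d j) ^ s)⁻¹ :=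
        Finset.sum_le_sum fun j _ => ENNReal.inv_le_inv.2 (rpow_le_rpow (iInf_le _ j) hs.le)
    _ = Fintype.card κ * ((⨅ j, d j) ^ s)⁻¹ := by
        rw [Finset.sum_const, nsmul_eq_mul, Finset.card_univ]

end ENNReal

section Polarization

variable {p : ℕ} (A : Set (EuclideanSpace ℝ (Fin p))) (N : ℕ) {s : ℝ}

lemma inv_rpow_covRadius_le_rPolConst (hs : 0 < s) :
    (covRadius A N ^ s)⁻¹ ≤ rPolConst s A N := by
  rw [covRadius, ENNReal.rpow_iInf _ hs, ENNReal.inv_iInf]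
  refine iSup_mono fun x => le_iInf₂ fun y hy => ?_
  calc ((⨆ y ∈ A, ⨅ j, edist y (x.1 j)) ^ s)⁻¹ ≤ ((⨅ j, edist y (x.1 j)) ^ s)⁻¹ :=
        ENNReal.inv_le_inv.2 <| ENNReal.rpow_le_rpow
          (le_biSup (fun y => ⨅ j, edist y (x.1 j)) hy) hs.le
    _ ≤ ∑ j, (edist y (x.1 j) ^ s)⁻¹ := ENNReal.inv_rpow_iInf_le_sum _ hs

lemma rPolConst_le_mul_inv_rpow_covRadius (hN : N ≠ 0) (hs : 0 < s) :
    rPolConst s A N ≤ N * (covRadius A N ^ s)⁻¹ := by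
  have hN₀ : (N : ℝ≥0∞) ≠ 0 := Nat.cast_ne_zero.2 hN
  have hN_top : (N : ℝ≥0∞) ≠ ∞ := ENNReal.natCast_ne_top N
  refine iSup_le fun x => ?_
  calc ⨅ y ∈ A, ∑ j, (edist y (x.1 j) ^ s)⁻¹
      ≤ ⨅ y ∈ A, (N : ℝ≥0∞) * ((⨅ j, edist y (x.1 j)) ^ s)⁻¹ :=
        iInf₂_mono fun y _ => by
          simpa using ENNReal.sum_inv_rpow_le_card_mul (fun j => edist y (x.1 j)) hs
    _ = N * ((⨆ y ∈ A, ⨅ j, edist y (x.1 j)) ^ s)⁻¹ := by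
        simp_rw [ENNReal.rpow_iSup _ hs, ENNReal.inv_iSup, ENNReal.mul_iInf_of_ne hN₀ hN_top]
    _ ≤ N * (covRadius A N ^ s)⁻¹ := by
        gcongr
        exact iInf_le _ x

lemma inv_covRadius_le_rPolConst_rpow (hs : 0 < s) :
    (covRadius A N)⁻¹ ≤ rPolConst s A N ^ (1 / s) := by
  rw [← ENNReal.inv_rpow_rpow_one_div _ hs.ne']
  gcongr
  exact inv_rpow_covRadius_le_rPolConst A N hs

lemma rPolConst_rpow_le (hN : N ≠ 0) (hs : 0 < s) :
    rPolConst s A N ^ (1 / s) ≤ (N : ℝ≥0∞) ^ (1 / s) * (covRadius A N)⁻¹ := by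
  rw [← ENNReal.inv_rpow_rpow_one_div (covRadius A N) hs.ne',
    ← ENNReal.mul_rpow_of_nonneg _ _ (by positivity)]
  gcongr
  exact rPolConst_le_mul_inv_rpow_covRadius A N hN hs

end Polarization

theorem stmt4_general {p : ℕ} (A : Set (EuclideanSpace ℝ (Fin p)))
    (N : ℕ) (hN : 0 < N) :
    (∀ s : ℝ, 0 < s → (covRadius A N)⁻¹ ≤ rPolConst s A N ^ (1 / s)) ∧
      Filter.Tendsto (fun s : ℝ => rPolConst s A N ^ (1 / s))
        Filter.atTop (nhds (covRadius A N)⁻¹) := by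
  refine ⟨fun s hs => inv_covRadius_le_rPolConst_rpow A N hs, ?_⟩
  have hroot : Tendsto (fun s : ℝ => (N : ℝ≥0∞) ^ (1 / s) * (covRadius A N)⁻¹) atTop
      (𝓝 (covRadius A N)⁻¹) := by
    simpa using ENNReal.Tendsto.mul_const
      (ENNReal.tendsto_rpow_one_div_atTop (Nat.cast_ne_zero.2 hN.ne') (ENNReal.natCast_ne_top N))
      (Or.inl one_ne_zero)
  exact tendsto_of_tendsto_of_tendsto_of_le_of_le' tendsto_const_nhds hroot
    ((eventually_gt_atTop 0).mono fun s hs => inv_covRadius_le_rPolConst_rpow A N hs)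
    ((eventually_gt_atTop 0).mono fun s hs => rPolConst_rpow_le A N hN.ne' hs)

theorem stmt4 {p : ℕ} (A : Set (EuclideanSpace ℝ (Fin p))) (hA : IsCompact A)
    (hne : A.Nonempty) (N : ℕ) (hN : 0 < N) :
    (∀ s : ℝ, 0 < s → (covRadius A N)⁻¹ ≤ rPolConst s A N ^ (1 / s)) ∧
      Filter.Tendsto (fun s : ℝ => rPolConst s A N ^ (1 / s))
        Filter.atTop (nhds (covRadius A N)⁻¹) :=
  stmt4_general A N hN
end

section
/- Let B, C ⊆ ℝ^p, w : (B∪C)×(B∪C) → [0,∞], 0 < d ≤ p, and s ≥ d. Define for a compact set X the lower asymptotic polarization h̲^w_{s,d}(X) := liminf_{N→∞} 𝒫^w_s(X;N)/τ_{s,d}(N), where τ_{s,d}(N) = N^{s/d} for s > d and N log N for s = d. Then h̲^w_{s,d}(B∪C)^{−d/s} ≤ h̲^w_{s,d}(B)^{−d/s} + h̲^w_{s,d}(C)^{−d/s} (with the conventions ∞^{−d/s} = 0 and 0^{−d/s} = ∞). -/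
open scoped ENNReal BigOperators

/-- The `N`-th weighted `(s,w)`-polarization constant of `A`. -/
noncomputable def wPolConst {p : ℕ}
    (w : EuclideanSpace ℝ (Fin p) → EuclideanSpace ℝ (Fin p) → ℝ≥0∞)
    (s : ℝ) (A : Set (EuclideanSpace ℝ (Fin p))) (N : ℕ) : ℝ≥0∞ :=
  ⨆ x : {x : Fin N → EuclideanSpace ℝ (Fin p) // ∀ j, x j ∈ A},
    ⨅ y ∈ A, ∑ j, w y (x.1 j) * (edist y (x.1 j) ^ s)⁻¹

/-- The normalizing sequence `τ_{s,d}(N)`: `N^{s/d}` for `s > d` and `N log N` for `s = d`. -/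
noncomputable def tau (s d : ℝ) (N : ℕ) : ℝ≥0∞ :=
  if s = d then (N : ℝ≥0∞) * ENNReal.ofReal (Real.log N) else (N : ℝ≥0∞) ^ (s / d)

/-- The lower asymptotic weighted polarization `h̲^w_{s,d}(X)`. -/
noncomputable def hLow {p : ℕ}
    (w : EuclideanSpace ℝ (Fin p) → EuclideanSpace ℝ (Fin p) → ℝ≥0∞)
    (s d : ℝ) (X : Set (EuclideanSpace ℝ (Fin p))) : ℝ≥0∞ :=
  Filter.liminf (fun N : ℕ => wPolConst w s X N / tau s d N) Filter.atTop

/-!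
Putting an `N₁`-point configuration on `B` next to an `N₂`-point configuration on `C` gives
`𝒫(B ∪ C; N₁ + N₂) ≥ min (𝒫(B; N₁), 𝒫(C; N₂))`, since the potential of the joint configuration
dominates that of each part. With `N₁ ≈ αN` and `τ(αN) ≳ α^{s/d} τ(N)` this yields
`h̲(B ∪ C) ≥ min (a^{s/d} h̲(B), b^{s/d} h̲(C))` for all `a, b > 0` with `a + b < 1`, i.e.
`h̲(B ∪ C)^{-d/s} ≤ max (h̲(B)^{-d/s} / a, h̲(C)^{-d/s} / b)`, and choosing `a, b` proportional
to `h̲(B)^{-d/s}, h̲(C)^{-d/s}` gives the claim.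
-/

open Filter
open scoped NNReal

theorem eventually_mul_mul_log_le {a a' : ℝ} (ha : a < a') (ha' : 0 < a') :
    ∀ᶠ N : ℕ in atTop, ∀ m : ℕ, a' * N ≤ m → a * (N * Real.log N) ≤ m * Real.log m := by
  have hlog : Tendsto (fun N : ℕ => Real.log N) atTop atTop :=
    Real.tendsto_log_atTop.comp tendsto_natCast_atTop_atTop
  filter_upwards [hlog.eventually_ge_atTop (a' * -Real.log a' / (a' - a)),
    (tendsto_natCast_atTop_atTop.const_mul_atTop ha').eventually_ge_atTop 1]
    with N hN hN1 m hm
  rw [div_le_iff₀ (sub_pos.2 ha)] at hN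
  have hN0 : (N : ℝ) ≠ 0 := by rintro h; rw [h, mul_zero] at hN1; linarith
  have hlog_nonneg : 0 ≤ Real.log (a' * N) := Real.log_nonneg hN1
  calc a * (N * Real.log N) ≤ a' * N * Real.log (a' * N) := by
        rw [Real.log_mul ha'.ne' hN0]
        nlinarith [mul_le_mul_of_nonneg_left hN (N.cast_nonneg : (0 : ℝ) ≤ N)]
    _ ≤ m * Real.log (a' * N) := mul_le_mul_of_nonneg_right hm hlog_nonneg
    _ ≤ m * Real.log m :=
        mul_le_mul_of_nonneg_left (Real.log_le_log (by linarith) hm) m.cast_nonneg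

theorem eventually_mul_le_floor_mul {a α : ℝ} (h : a < α) :
    ∀ᶠ N : ℕ in atTop, a * N ≤ ⌊α * N⌋₊ := by
  filter_upwards [(tendsto_natCast_atTop_atTop.const_mul_atTop (sub_pos.2 h)).eventually_ge_atTop 1]
    with N hN
  linarith [Nat.lt_floor_add_one (α * N)]

theorem ENNReal.mul_div_le_div_of_mul_le {c x u v : ℝ≥0∞} (hc : c ≠ ⊤) (h : c * u ≤ v) :
    c * (x / v) ≤ x / u := by
  rcases eq_or_ne c 0 with rfl | hc0
  · simp
  calc c * (x / v) ≤ c * (x / (c * u)) := by gcongr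
    _ = x / u := by rw [← mul_div_assoc, ENNReal.mul_div_mul_left _ _ hc0 hc]

theorem ENNReal.rpow_inv_mul_rpow_neg {r : ℝ} (hr : 0 < r) {a : ℝ≥0} (ha : a ≠ 0) (x : ℝ≥0∞) :
    ((a : ℝ≥0∞) ^ r⁻¹ * x) ^ (-r) = x ^ (-r) / a := by
  rw [ENNReal.rpow_neg, ENNReal.mul_rpow_of_nonneg _ _ hr.le, ENNReal.rpow_inv_rpow hr.ne',
    ENNReal.mul_inv (Or.inl (ENNReal.coe_ne_zero.2 ha)) (Or.inl ENNReal.coe_ne_top),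
    ← ENNReal.rpow_neg, div_eq_mul_inv, mul_comm]

theorem ENNReal.le_add_of_forall_le_max_div {x y z : ℝ≥0∞}
    (h : ∀ a b : ℝ≥0, 0 < a → 0 < b → a + b < 1 → z ≤ max (x / a) (y / b)) : z ≤ x + y := by
  refine le_of_forall_gt_imp_ge_of_dense fun c hc => ?_
  rcases eq_or_ne c ⊤ with rfl | hc_top
  · exact le_top
  lift c to ℝ≥0 using hc_top
  lift x to ℝ≥0 using ne_top_of_le_ne_top coe_ne_top (le_self_add.trans hc.le)
  lift y to ℝ≥0 using ne_top_of_le_ne_top coe_ne_top (le_add_self.trans hc.le)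
  have hc' : x + y < c := by exact_mod_cast hc
  have hc0 : 0 < c := zero_le.trans_lt hc'
  set e := (c - (x + y)) / 3
  have he : 0 < e := div_pos (tsub_pos_of_lt hc') three_pos
  have hce : x + y + 3 * e = c := by
    rw [mul_div_cancel₀ _ three_ne_zero]
    exact add_tsub_cancel_of_le hc'.le
  have hdiv_le : ∀ u : ℝ≥0, (u : ℝ≥0∞) / ((u + e) / c : ℝ≥0) ≤ c := fun u =>
    ENNReal.div_le_of_le_mul <| by
      rw [← ENNReal.coe_mul, mul_div_cancel₀ _ hc0.ne']
      exact_mod_cast le_self_add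
  refine (h ((x + e) / c) ((y + e) / c) (by positivity) (by positivity) ?_).trans
    (max_le (hdiv_le x) (hdiv_le y))
  rw [← add_div, div_lt_one hc0, ← hce]
  linear_combination he

theorem eventually_rpow_mul_tau_le {s d : ℝ} (hd : 0 < d) (hs : 0 ≤ s) {a : ℝ≥0} {a' : ℝ}
    (ha : a < a') {m : ℕ → ℕ} (hm : ∀ᶠ N in atTop, a' * N ≤ m N) :
    ∀ᶠ N in atTop, (a : ℝ≥0∞) ^ (s / d) * tau s d N ≤ tau s d (m N) := by
  unfold tau
  split_ifs with hsd
  · subst hsd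
    filter_upwards [hm, eventually_mul_mul_log_le ha (a.coe_nonneg.trans_lt ha)] with N hN hlog
    rw [div_self hd.ne', ENNReal.rpow_one, ← ENNReal.ofReal_coe_nnreal,
      ← ENNReal.ofReal_natCast, ← ENNReal.ofReal_natCast, ← ENNReal.ofReal_mul (by positivity),
      ← ENNReal.ofReal_mul a.coe_nonneg, ← ENNReal.ofReal_mul (by positivity)]
    exact ENNReal.ofReal_le_ofReal (hlog _ hN)
  · filter_upwards [hm] with N hN
    rw [← ENNReal.mul_rpow_of_nonneg _ _ (div_nonneg hs hd.le)]
    gcongr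
    rw [← ENNReal.ofReal_coe_nnreal, ← ENNReal.ofReal_natCast, ← ENNReal.ofReal_natCast,
      ← ENNReal.ofReal_mul a.coe_nonneg]
    exact ENNReal.ofReal_le_ofReal
      ((mul_le_mul_of_nonneg_right ha.le N.cast_nonneg).trans hN)

section Polarization

variable {p : ℕ} (w : EuclideanSpace ℝ (Fin p) → EuclideanSpace ℝ (Fin p) → ℝ≥0∞) {s d : ℝ}

theorem min_wPolConst_le_wPolConst_union (B C : Set (EuclideanSpace ℝ (Fin p))) (M N : ℕ) :
    min (wPolConst w s B M) (wPolConst w s C N) ≤ wPolConst w s (B ∪ C) (M + N) := by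
  simp only [wPolConst, iSup_inf_eq, inf_iSup_eq]
  refine iSup₂_le fun x' x => le_iSup_of_le ⟨Fin.append x.1 x'.1, Fin.addCases
    (fun i => by simpa using Or.inl (x.2 i)) (fun i => by simpa using Or.inr (x'.2 i))⟩ ?_
  refine le_iInf₂ fun y hy => ?_
  simp only [Fin.sum_univ_add, Fin.append_left, Fin.append_right]
  rcases hy with hy | hy
  · exact inf_le_left.trans ((iInf₂_le y hy).trans le_self_add)
  · exact inf_le_right.trans ((iInf₂_le y hy).trans le_add_self)
theorem rpow_mul_hLow_le_liminf (hd : 0 < d) (hs : 0 ≤ s) (X : Set (EuclideanSpace ℝ (Fin p)))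
    {a : ℝ≥0} {a' : ℝ} (ha : a < a') {m : ℕ → ℕ} (hm : ∀ᶠ N in atTop, a' * N ≤ m N) :
    (a : ℝ≥0∞) ^ (s / d) * hLow w s d X ≤
      liminf (fun N => wPolConst w s X (m N) / tau s d N) atTop := by
  have hm_top : Tendsto m atTop atTop :=
    tendsto_natCast_atTop_iff.mp <| tendsto_atTop_mono' _ hm <|
      tendsto_natCast_atTop_atTop.const_mul_atTop (a.coe_nonneg.trans_lt ha)
  have hc : (a : ℝ≥0∞) ^ (s / d) ≠ ⊤ :=
    ENNReal.rpow_ne_top_of_nonneg (div_nonneg hs hd.le) ENNReal.coe_ne_top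
  calc (a : ℝ≥0∞) ^ (s / d) * hLow w s d X
      ≤ (a : ℝ≥0∞) ^ (s / d) *
          liminf ((fun M => wPolConst w s X M / tau s d M) ∘ m) atTop := by
        gcongr
        exact hm_top.liminf_le_liminf_comp
    _ = liminf (fun N => (a : ℝ≥0∞) ^ (s / d) *
          (wPolConst w s X (m N) / tau s d (m N))) atTop :=
        (ENNReal.liminf_const_mul_of_ne_top hc).symm
    _ ≤ liminf (fun N => wPolConst w s X (m N) / tau s d N) atTop := by
        refine liminf_le_liminf ?_
        filter_upwards [eventually_rpow_mul_tau_le hd hs ha hm] with N hN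
        exact ENNReal.mul_div_le_div_of_mul_le hc hN

theorem min_rpow_mul_hLow_le_hLow_union (hd : 0 < d) (hs : 0 ≤ s)
    (B C : Set (EuclideanSpace ℝ (Fin p))) {a b : ℝ≥0} (hab : a + b < 1) :
    min ((a : ℝ≥0∞) ^ (s / d) * hLow w s d B) ((b : ℝ≥0∞) ^ (s / d) * hLow w s d C) ≤
      hLow w s d (B ∪ C) := by
  have hab' : (a : ℝ) + b < 1 := by exact_mod_cast hab
  obtain ⟨δ, hδ, hδab⟩ : ∃ δ : ℝ, 0 < δ ∧ a + b + 3 * δ = 1 :=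
    ⟨(1 - (a + b)) / 3, by linarith, by ring⟩
  set α : ℝ := a + 2 * δ with hα_def
  have hα : 0 ≤ α ∧ α ≤ 1 := ⟨by positivity, by linarith⟩
  have hfloor_le : ∀ N : ℕ, ⌊α * N⌋₊ ≤ N := fun N =>
    Nat.floor_le_of_le (mul_le_of_le_one_left N.cast_nonneg hα.2)
  have hB := rpow_mul_hLow_le_liminf w hd hs B (a := a) (a' := a + δ)
    (m := fun N => ⌊α * N⌋₊) (by linarith) (eventually_mul_le_floor_mul (by linarith))
  have hC := rpow_mul_hLow_le_liminf w hd hs C (a := b) (a' := b + δ)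
    (m := fun N => N - ⌊α * N⌋₊) (by linarith) <| Eventually.of_forall fun N => by
      rw [Nat.cast_sub (hfloor_le N)]
      nlinarith [Nat.floor_le (mul_nonneg hα.1 N.cast_nonneg)]
  refine (min_le_min hB hC).trans ?_
  rw [← liminf_min]
  refine liminf_le_liminf (Eventually.of_forall fun N => ?_)
  rw [← Monotone.map_min fun _ _ h => ENNReal.div_le_div_right h _]
  gcongr
  simpa [Nat.add_sub_cancel' (hfloor_le N)] using
    min_wPolConst_le_wPolConst_union w B C ⌊α * N⌋₊ (N - ⌊α * N⌋₊)

end Polarization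

theorem stmt5_general {p : ℕ} (B C : Set (EuclideanSpace ℝ (Fin p)))
    (w : EuclideanSpace ℝ (Fin p) → EuclideanSpace ℝ (Fin p) → ℝ≥0∞)
    (d s : ℝ) (hd : 0 < d) (hs : d ≤ s) :
    hLow w s d (B ∪ C) ^ (-(d / s)) ≤ hLow w s d B ^ (-(d / s)) + hLow w s d C ^ (-(d / s)) := by
  have hr : 0 < d / s := div_pos hd (hd.trans_le hs)
  have hanti : Antitone fun x : ℝ≥0∞ => x ^ (-(d / s)) := fun x y hxy => by
    simp only [ENNReal.rpow_neg]
    gcongr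
  refine ENNReal.le_add_of_forall_le_max_div fun a b ha hb hab => ?_
  have key := min_rpow_mul_hLow_le_hLow_union w hd (hd.le.trans hs) B C hab
  rw [← inv_div d s] at key
  calc hLow w s d (B ∪ C) ^ (-(d / s))
      ≤ (min ((a : ℝ≥0∞) ^ (d / s)⁻¹ * hLow w s d B)
          ((b : ℝ≥0∞) ^ (d / s)⁻¹ * hLow w s d C)) ^ (-(d / s)) := hanti key
    _ = max (hLow w s d B ^ (-(d / s)) / a) (hLow w s d C ^ (-(d / s)) / b) := by
        rw [hanti.map_min, ENNReal.rpow_inv_mul_rpow_neg hr ha.ne',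
          ENNReal.rpow_inv_mul_rpow_neg hr hb.ne']

theorem stmt5 {p : ℕ} (B C : Set (EuclideanSpace ℝ (Fin p)))
    (w : EuclideanSpace ℝ (Fin p) → EuclideanSpace ℝ (Fin p) → ℝ≥0∞)
    (d s : ℝ) (hd : 0 < d) (hdp : d ≤ p) (hs : d ≤ s) :
    hLow w s d (B ∪ C) ^ (-(d / s)) ≤ hLow w s d B ^ (-(d / s)) + hLow w s d C ^ (-(d / s)) :=
  stmt5_general B C w d s hd hs
end

section
/- For sets B, C ⊆ ℝ^p, a nonnegative weight w on (B∪C)×(B∪C), s > 0, and positive integers N₁, N₂ with N = N₁ + N₂, one has 𝒫^w_s(B∪C; N) ≥ min{𝒫^w_s(B; N₁), 𝒫^w_s(C; N₂)}. -/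
open scoped ENNReal BigOperators

theorem stmt6 {p : ℕ} (B C : Set (EuclideanSpace ℝ (Fin p)))
    (w : EuclideanSpace ℝ (Fin p) → EuclideanSpace ℝ (Fin p) → ℝ≥0∞)
    (s : ℝ) (hs : 0 < s) (N₁ N₂ : ℕ) (h₁ : 0 < N₁) (h₂ : 0 < N₂) :
    min (wPolConst w s B N₁) (wPolConst w s C N₂) ≤ wPolConst w s (B ∪ C) (N₁ + N₂) := by
  have key : ∀ (a : {x : Fin N₁ → EuclideanSpace ℝ (Fin p) // ∀ j, x j ∈ B})
      (b : {x : Fin N₂ → EuclideanSpace ℝ (Fin p) // ∀ j, x j ∈ C}),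
      min (⨅ y ∈ B, ∑ j, w y (a.1 j) * (edist y (a.1 j) ^ s)⁻¹)
          (⨅ y ∈ C, ∑ j, w y (b.1 j) * (edist y (b.1 j) ^ s)⁻¹)
        ≤ wPolConst w s (B ∪ C) (N₁ + N₂) := by
    intro a b
    set x : Fin (N₁ + N₂) → EuclideanSpace ℝ (Fin p) := Fin.append a.1 b.1 with hxdef
    have hmem : ∀ j, x j ∈ B ∪ C := by
      intro j
      refine Fin.addCases (fun i => ?_) (fun i => ?_) j
      · simp only [hxdef, Fin.append_left]
        exact Or.inl (a.2 i)
      · simp only [hxdef, Fin.append_right]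
        exact Or.inr (b.2 i)
    have hstep : min (⨅ y ∈ B, ∑ j, w y (a.1 j) * (edist y (a.1 j) ^ s)⁻¹)
          (⨅ y ∈ C, ∑ j, w y (b.1 j) * (edist y (b.1 j) ^ s)⁻¹)
        ≤ ⨅ y ∈ B ∪ C, ∑ j, w y (x j) * (edist y (x j) ^ s)⁻¹ := by
      refine le_iInf₂ fun y hy => ?_
      have hsum : ∑ j, w y (x j) * (edist y (x j) ^ s)⁻¹
          = (∑ j, w y (a.1 j) * (edist y (a.1 j) ^ s)⁻¹)
            + ∑ j, w y (b.1 j) * (edist y (b.1 j) ^ s)⁻¹ := by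
        rw [Fin.sum_univ_add]
        simp [hxdef, Fin.append_left, Fin.append_right]
      rcases hy with hy | hy
      · refine le_trans (min_le_left _ _) (le_trans (iInf₂_le y hy) ?_)
        rw [hsum]; exact le_self_add
      · refine le_trans (min_le_right _ _) (le_trans (iInf₂_le y hy) ?_)
        rw [hsum]; exact le_add_self
    refine le_trans hstep ?_
    exact le_iSup_of_le (⟨x, hmem⟩ :
      {x : Fin (N₁ + N₂) → EuclideanSpace ℝ (Fin p) // ∀ j, x j ∈ B ∪ C}) le_rfl
  rw [show (min (wPolConst w s B N₁) (wPolConst w s C N₂))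
      = (wPolConst w s B N₁) ⊓ (wPolConst w s C N₂) from rfl]
  rw [wPolConst, wPolConst, iSup_inf_eq]
  refine iSup_le fun a => ?_
  rw [inf_iSup_eq]
  exact iSup_le fun b => key a b
end
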